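/- Fix a natural number n ≥ 2 and define f(z) = z^n + 1/(2z) for z on the unit circle. Then for every polynomial P of degree at most n − 1 such that f + P is nonvanishing on the unit circle, the winding number of f + P around 0 is nonnegative, yet f does not extend holomorphically through the open unit disc. -/

import Mathlib

open Polynomial Metric
open scoped Classical

/-- `g` (restricted to the unit circle) has winding number `n` around `0`:
there is a continuous argument lift `α` along `θ ↦ g (exp (iθ))` whose total
increase over `[0, 2π]` is `2πn`. -/
def HasWindingNumber (g : ℂ → ℂ) (n : ℤ) : Prop :=
  ∃ α : ℝ → ℝ, Continuous α ∧
    (∀ θ : ℝ, g (Complex.exp (θ * Complex.I)) =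
      (‖g (Complex.exp (θ * Complex.I))‖ : ℂ) * Complex.exp (α θ * Complex.I)) ∧
    α (2 * Real.pi) - α 0 = n * (2 * Real.pi)

/-- `f` on the unit circle extends continuously to the closed unit disc,
holomorphically on the open unit disc. -/
def ExtendsHolo (f : ℂ → ℂ) : Prop :=
  ∃ F : ℂ → ℂ, ContinuousOn F (closedBall 0 1) ∧
    DifferentiableOn ℂ F (ball 0 1) ∧ ∀ z ∈ sphere (0:ℂ) 1, F z = f z

/-- Multiplicity of a zero of a (holomorphic) function: least `n` with
nonvanishing `n`-th derivative. -/
noncomputable def holoOrder (f : ℂ → ℂ) (z : ℂ) : ℕ :=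
  sInf {n | iteratedDeriv n f z ≠ 0}

/-! On the unit circle `z ^ n + 1 / (2 z) + P z = z⁻¹ g(z)` with `g = X ^ (n + 1) + X P + 1/2`
monic of degree `n + 1`, so the winding number is `-1` plus the number of roots of `g` in the
open disc. The roots of `g` multiply to `±1/2`, so one of them lies in the disc.

If `F` extended `z ^ n + 1 / (2 z)`, then `z F(z)` and `z ^ (n + 1) + 1/2` would be holomorphic
functions agreeing on the circle, hence on the disc; at `z = 0` this gives `0 = 1/2`. -/

open Complex
open scoped Real

theorem exp_ofReal_mul_I_mem_sphere (θ : ℝ) : exp (θ * I) ∈ sphere (0 : ℂ) 1 := by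
  simp [norm_exp_ofReal_mul_I]

theorem ne_zero_of_mem_sphere_zero_one {z : ℂ} (hz : z ∈ sphere (0 : ℂ) 1) : z ≠ 0 :=
  ne_zero_of_mem_sphere one_ne_zero ⟨z, hz⟩

theorem HasWindingNumber.unique {g : ℂ → ℂ} {m m' : ℤ} (hg : ∀ z ∈ sphere (0 : ℂ) 1, g z ≠ 0)
    (h : HasWindingNumber g m) (h' : HasWindingNumber g m') : m = m' := by
  obtain ⟨α, hαc, hα, hαw⟩ := h
  obtain ⟨β, hβc, hβ, hβw⟩ := h'
  have hαβ : ∀ θ, ∃ k : ℤ, α θ - β θ = k * (2 * π) := fun θ => by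
    have hne : (‖g (exp (θ * I))‖ : ℂ) ≠ 0 := by
      simpa using hg _ (exp_ofReal_mul_I_mem_sphere θ)
    obtain ⟨k, hk⟩ := exp_eq_exp_iff_exists_int.1
      (mul_left_cancel₀ hne ((hα θ).symm.trans (hβ θ)))
    exact ⟨k, by simpa [mul_comm, ← sub_eq_iff_eq_add'] using congrArg im hk⟩
  -- `(α - β) / 2π` is a continuous integer-valued function, hence constant
  choose k hk using hαβ
  have hkc : Continuous k := by
    rw [Int.isClosedEmbedding_coe_real.isEmbedding.continuous_iff]
    convert ((hαc.sub hβc).div_const (2 * π)) using 1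
    ext θ
    simp [hk θ]
  have hk_const : k (2 * π) = k 0 := PreconnectedSpace.constant inferInstance hkc
  have h2π := hk (2 * π)
  rw [hk_const] at h2π
  have : (m : ℝ) * (2 * π) = m' * (2 * π) := by
    rw [← hαw, ← hβw]
    linarith [hk 0]
  exact_mod_cast mul_right_cancel₀ (by positivity) this

theorem HasWindingNumber.congr {g h : ℂ → ℂ} {m : ℤ} (hg : HasWindingNumber g m)
    (hgh : ∀ z ∈ sphere (0 : ℂ) 1, g z = h z) : HasWindingNumber h m := by
  obtain ⟨α, hαc, hα, hαw⟩ := hg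
  refine ⟨α, hαc, fun θ => ?_, hαw⟩
  rw [← hgh _ (exp_ofReal_mul_I_mem_sphere θ)]
  exact hα θ

theorem HasWindingNumber.mul {g h : ℂ → ℂ} {m k : ℤ} (hg : HasWindingNumber g m)
    (hh : HasWindingNumber h k) : HasWindingNumber (fun z => g z * h z) (m + k) := by
  obtain ⟨α, hαc, hα, hαw⟩ := hg
  obtain ⟨β, hβc, hβ, hβw⟩ := hh
  refine ⟨α + β, hαc.add hβc, fun θ => ?_, ?_⟩
  · simp only [Pi.add_apply, norm_mul, ofReal_mul, ofReal_add, add_mul, Complex.exp_add]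
    conv_lhs => rw [hα θ, hβ θ]
    ring
  · simp only [Pi.add_apply]
    push_cast
    linarith

theorem hasWindingNumber_const (c : ℂ) : HasWindingNumber (fun _ => c) 0 :=
  ⟨fun _ => c.arg, continuous_const, fun _ => (norm_mul_exp_arg_mul_I c).symm, by simp⟩

theorem hasWindingNumber_zpow (k : ℤ) : HasWindingNumber (fun z => z ^ k) k := by
  refine ⟨fun θ => k * θ, continuous_const.mul continuous_id, fun θ => ?_, by ring⟩
  simp only
  rw [norm_zpow, norm_exp_ofReal_mul_I, one_zpow, ofReal_one, one_mul, ← exp_int_mul]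
  push_cast
  ring_nf

theorem hasWindingNumber_zero_of_re_pos {g : ℂ → ℂ} (hg : ContinuousOn g (sphere 0 1))
    (hre : ∀ z ∈ sphere (0 : ℂ) 1, 0 < (g z).re) : HasWindingNumber g 0 := by
  refine ⟨fun θ => (g (exp (θ * I))).arg, ?_, fun θ => (norm_mul_exp_arg_mul_I _).symm, ?_⟩
  · have hgc : Continuous fun θ : ℝ => g (exp (θ * I)) :=
      hg.comp_continuous (by fun_prop) exp_ofReal_mul_I_mem_sphere
    exact continuous_iff_continuousAt.2 fun θ => ContinuousAt.comp (g := arg)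
      (continuousAt_arg (Or.inl (hre _ (exp_ofReal_mul_I_mem_sphere θ)))) hgc.continuousAt
  · simp [exp_two_pi_mul_I]

theorem re_one_sub_pos {w : ℂ} (hw : ‖w‖ < 1) : 0 < (1 - w).re := by
  simp only [sub_re, one_re, sub_pos]
  exact (re_le_norm w).trans_lt hw

theorem hasWindingNumber_sub_of_norm_lt_one {r : ℂ} (hr : ‖r‖ < 1) :
    HasWindingNumber (fun z => z - r) 1 := by
  have hw : HasWindingNumber (fun z => 1 - r * z⁻¹) 0 := by
    refine hasWindingNumber_zero_of_re_pos ?_ fun z hz => re_one_sub_pos ?_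
    · exact continuousOn_const.sub (continuousOn_const.mul
        (continuousOn_inv₀.mono fun z hz => ne_zero_of_mem_sphere_zero_one hz))
    · simpa [norm_mul, norm_inv, mem_sphere_zero_iff_norm.1 hz] using hr
  refine ((hasWindingNumber_zpow 1).mul hw).congr fun z hz => ?_
  have hz0 := ne_zero_of_mem_sphere_zero_one hz
  field_simp

theorem hasWindingNumber_sub_of_one_lt_norm {r : ℂ} (hr : 1 < ‖r‖) :
    HasWindingNumber (fun z => z - r) 0 := by
  have hr0 : r ≠ 0 := norm_pos_iff.1 (one_pos.trans hr)
  have hw : HasWindingNumber (fun z => 1 - z * r⁻¹) 0 := by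
    refine hasWindingNumber_zero_of_re_pos (by fun_prop) fun z hz => re_one_sub_pos ?_
    simpa [norm_mul, norm_inv, mem_sphere_zero_iff_norm.1 hz] using inv_lt_one_of_one_lt₀ hr
  refine ((hasWindingNumber_const (-r)).mul hw).congr fun z hz => ?_
  field_simp
  ring

theorem hasWindingNumber_multiset_prod_sub (s : Multiset ℂ) (hs : ∀ r ∈ s, ‖r‖ ≠ 1) :
    HasWindingNumber (fun z => (s.map (z - ·)).prod) (s.countP (‖·‖ < 1)) := by
  induction s using Multiset.induction_on with
  | empty => simpa using hasWindingNumber_const 1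
  | cons r s ih =>
    have hr := hs r (Multiset.mem_cons_self r s)
    have ih := ih fun x hx => hs x (Multiset.mem_cons_of_mem hx)
    simp only [Multiset.map_cons, Multiset.prod_cons, Multiset.countP_cons, Nat.cast_add]
    rw [add_comm]
    split_ifs with hlt
    · exact_mod_cast (hasWindingNumber_sub_of_norm_lt_one hlt).mul ih
    · simpa using (hasWindingNumber_sub_of_one_lt_norm
        (lt_of_le_of_ne (not_lt.1 hlt) (Ne.symm hr))).mul ih

theorem Polynomial.hasWindingNumber_eval (p : ℂ[X]) (hp : ∀ a ∈ p.roots, ‖a‖ ≠ 1) :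
    HasWindingNumber (fun z => p.eval z) (p.roots.countP (‖·‖ < 1)) := by
  simpa [← (IsAlgClosed.splits p).eval_eq_prod_roots] using
    (hasWindingNumber_const p.leadingCoeff).mul (hasWindingNumber_multiset_prod_sub _ hp)

theorem Polynomial.monic_X_pow_succ_add_C_add_X_mul {R : Type*} [Semiring R] (c : R) {P : R[X]}
    {n : ℕ} (hP : P.natDegree < n) : (X ^ (n + 1) + (C c + X * P)).Monic := by
  refine monic_X_pow_add (lt_of_le_of_lt (degree_le_of_natDegree_le (n := n) ?_)
    (WithBot.coe_lt_coe.2 n.lt_succ_self))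
  refine (natDegree_add_le _ _).trans (max_le (by simp) (natDegree_mul_le.trans ?_))
  have := natDegree_X_le (R := R)
  omega

theorem Polynomial.Monic.exists_mem_roots_norm_lt_one {K : Type*} [NormedField K] {p : K[X]}
    (hm : p.Monic) (hs : p.Splits) (h0 : ‖p.coeff 0‖ < 1) : ∃ a ∈ p.roots, ‖a‖ < 1 := by
  by_contra! hall
  have hprod : ‖p.coeff 0‖ = (p.roots.map (‖·‖)).prod := by
    rw [hs.coeff_zero_eq_prod_roots_of_monic hm, norm_mul, norm_pow, norm_neg, norm_one, one_pow,
      one_mul]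
    exact map_multiset_prod normHom p.roots
  exact h0.not_ge (hprod ▸ Multiset.one_le_prod (Multiset.forall_mem_map_iff.2 hall))

theorem not_extendsHolo_add_div {p : ℂ → ℂ} (hp : Differentiable ℂ p) {c : ℂ} (hc : c ≠ 0) :
    ¬ ExtendsHolo (fun z => p z + c / z) := by
  rintro ⟨F, hFc, hFd, hF⟩
  have hlhs : DiffContOnCl ℂ (fun z => z * F z) (ball 0 1) :=
    ⟨differentiableOn_id.mul hFd, by
      rw [closure_ball (0 : ℂ) one_ne_zero]; exact continuousOn_id.mul hFc⟩
  have hrhs : DiffContOnCl ℂ (fun z => z * p z + c) (ball 0 1) :=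
    (by fun_prop : Differentiable ℂ fun z => z * p z + c).diffContOnCl
  have heq := eqOn_of_eqOn_frontier isBounded_ball hlhs hrhs (by
    rw [frontier_ball (0 : ℂ) one_ne_zero]
    intro z hz
    have hz0 := ne_zero_of_mem_sphere_zero_one hz
    simp only [hF z hz]
    field_simp)
  exact hc (by simpa using (heq (mem_ball_self one_pos)).symm)

theorem stmt11 (n : ℕ) (hn : 2 ≤ n) :
    (∀ P : Polynomial ℂ, P.natDegree ≤ n - 1 →
      (∀ z ∈ sphere (0:ℂ) 1, z ^ n + 1 / (2 * z) + P.eval z ≠ 0) →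
      ∀ m : ℤ, HasWindingNumber (fun z => z ^ n + 1 / (2 * z) + P.eval z) m → 0 ≤ m) ∧
    ¬ ExtendsHolo (fun z => z ^ n + 1 / (2 * z)) := by
  refine ⟨fun P hPdeg hP m hm => ?_, ?_⟩
  · set g : ℂ[X] := X ^ (n + 1) + (C (1 / 2) + X * P)
    have hmonic : g.Monic := monic_X_pow_succ_add_C_add_X_mul _ (by omega)
    have hfg : ∀ z ∈ sphere (0 : ℂ) 1,
        z ^ (-1 : ℤ) * g.eval z = z ^ n + 1 / (2 * z) + P.eval z := by
      intro z hz
      have hz0 := ne_zero_of_mem_sphere_zero_one hz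
      simp only [g, eval_add, eval_pow, eval_X, eval_C, eval_mul, zpow_neg_one]
      field_simp
      ring
    have hroots : ∀ a ∈ g.roots, ‖a‖ ≠ 1 := fun a ha h1 => by
      have ha1 : a ∈ sphere (0 : ℂ) 1 := mem_sphere_zero_iff_norm.2 h1
      refine hP a ha1 ?_
      rw [← hfg a ha1, (mem_roots hmonic.ne_zero).1 ha, mul_zero]
    have hwind := ((hasWindingNumber_zpow (-1)).mul (g.hasWindingNumber_eval hroots)).congr hfg
    obtain ⟨a, ha, ha1⟩ := hmonic.exists_mem_roots_norm_lt_one (IsAlgClosed.splits g)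
      (by norm_num [g])
    have hcount := Multiset.countP_pos_of_mem (p := (‖·‖ < 1)) ha ha1
    rw [hm.unique hP hwind]
    omega
  · simpa only [div_div] using
      not_extendsHolo_add_div (differentiable_pow n) (one_div_ne_zero (two_ne_zero (α := ℂ)))
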